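/- Let I ⊂ S be a squarefree monomial ideal. Then the squarefree Stanley depth of S/I equals the Stanley depth of S/I: sqdepth(S/I) = sdepth(S/I). In particular, any Stanley decomposition of S/I gives rise to a squarefree Stanley decomposition with at least the same Stanley depth. -/
import Mathlib

/-- Monomials of the Stanley space `u K[Z]`. -/
def stanleySet {n : ℕ} (u : Fin n →₀ ℕ) (Z : Finset (Fin n)) : Set (Fin n →₀ ℕ) :=
  {a | ∃ v : Fin n →₀ ℕ, (v.support : Set (Fin n)) ⊆ (Z : Set (Fin n)) ∧ a = u + v}

/-- The squarefree monomial `x_F`. -/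
noncomputable def sqInd {n : ℕ} (F : Finset (Fin n)) : Fin n →₀ ℕ :=
  Finsupp.indicator F (fun _ _ => 1)

lemma sqInd_apply {n : ℕ} (F : Finset (Fin n)) (l : Fin n) :
    sqInd F l = if l ∈ F then 1 else 0 := by
  simp [sqInd, Finsupp.indicator_apply]

lemma sqInd_support {n : ℕ} (F : Finset (Fin n)) : (sqInd F).support = F := by
  ext l; simp [Finsupp.mem_support_iff, sqInd_apply]

lemma mem_stanleySet {n : ℕ} {u a : Fin n →₀ ℕ} {Z : Finset (Fin n)} :
    a ∈ stanleySet u Z ↔ u ≤ a ∧ ∀ l, u l < a l → l ∈ Z := by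
  constructor
  · rintro ⟨v, hv, rfl⟩
    refine ⟨le_add_right le_rfl, fun l hl => hv ?_⟩
    simp only [Finsupp.coe_add, Pi.add_apply] at hl
    simp only [Finset.coe_sort_coe, Finset.mem_coe, Finsupp.mem_support_iff]
    omega
  · rintro ⟨h1, h2⟩
    refine ⟨a - u, fun l hl => ?_, (add_tsub_cancel_of_le h1).symm⟩
    simp only [Finset.mem_coe, Finsupp.mem_support_iff, Finsupp.tsub_apply] at hl
    exact h2 l (by omega)

lemma keyC {n : ℕ} {u : Fin n →₀ ℕ} (hu : ∀ l, u l ≤ 1) {Z : Finset (Fin n)}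
    {a : Fin n →₀ ℕ} :
    a ∈ stanleySet (sqInd u.support) (u.support ∪ Z) ↔
      sqInd a.support ∈ stanleySet u Z := by
  simp only [mem_stanleySet, Finsupp.le_def, sqInd_apply, Finsupp.mem_support_iff]
  constructor
  · rintro ⟨h1, h2⟩
    refine ⟨fun l => ?_, fun l hl => ?_⟩
    · have h := h1 l; have h' := hu l
      split_ifs at h ⊢ <;> omega
    · have ha : ¬ a l = 0 := by split_ifs at hl <;> omega
      have hu0 : u l = 0 := by rw [if_pos ha] at hl; omega
      have hmem := h2 l (by rw [if_neg (not_not_intro hu0)]; omega)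
      rcases Finset.mem_union.mp hmem with h | h
      · rw [Finsupp.mem_support_iff] at h; exact absurd hu0 h
      · exact h
  · rintro ⟨h1, h2⟩
    refine ⟨fun l => ?_, fun l hl => ?_⟩
    · have h := h1 l; have h' := hu l
      split_ifs at h ⊢ <;> omega
    · by_cases hu0 : u l = 0
      · have ha : ¬ a l = 0 := by split_ifs at hl <;> omega
        refine Finset.mem_union_right _ (h2 l ?_)
        rw [if_pos ha]; omega
      · exact Finset.mem_union_left _ (Finsupp.mem_support_iff.mpr hu0)

lemma sq_in_M {n : ℕ} {M : Set (Fin n →₀ ℕ)}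
    (hsqf : ∃ G : Set (Fin n →₀ ℕ), (∀ g ∈ G, ∀ i, g i ≤ 1) ∧ M = {a | ∃ g ∈ G, g ≤ a})
    (a : Fin n →₀ ℕ) : a ∈ M ↔ sqInd a.support ∈ M := by
  obtain ⟨G, hG, rfl⟩ := hsqf
  simp only [Set.mem_setOf_eq]
  constructor
  · rintro ⟨g, hg, hle⟩
    refine ⟨g, hg, Finsupp.le_def.mpr fun l => ?_⟩
    have h1 := Finsupp.le_def.mp hle l
    have h2 := hG g hg l
    simp only [sqInd_apply, Finsupp.mem_support_iff]
    split_ifs <;> omega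
  · rintro ⟨g, hg, hle⟩
    refine ⟨g, hg, Finsupp.le_def.mpr fun l => ?_⟩
    have h1 := Finsupp.le_def.mp hle l
    have h2 := hG g hg l
    simp only [sqInd_apply, Finsupp.mem_support_iff] at h1
    split_ifs at h1 <;> omega
/-- for a squarefree monomial ideal `I` (monomial set `M`, generated by
squarefree monomials), `sqdepth(S/I) = sdepth(S/I)`: for every `k`, there is a Stanley
decomposition of `S/I` of Stanley depth `≥ k` iff there is a squarefree Stanley
decomposition of Stanley depth `≥ k`. -/
theorem sqdepth_eq_sdepth
    {n : ℕ} (M : Set (Fin n →₀ ℕ)) (hM : ∀ a ∈ M, ∀ b, a + b ∈ M)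
    (hsqf : ∃ G : Set (Fin n →₀ ℕ), (∀ g ∈ G, ∀ i, g i ≤ 1) ∧ M = {a | ∃ g ∈ G, g ≤ a})
    (k : ℕ) :
    (∃ (r : ℕ) (u : Fin r → (Fin n →₀ ℕ)) (Z : Fin r → Finset (Fin n)),
        (Pairwise fun i j =>
          Disjoint (stanleySet (u i) (Z i)) (stanleySet (u j) (Z j))) ∧
        (⋃ i, stanleySet (u i) (Z i)) = Mᶜ ∧
        ∀ i, k ≤ (Z i).card) ↔
      (∃ (r : ℕ) (F G : Fin r → Finset (Fin n)),
        (∀ i, F i ⊆ G i) ∧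
        (Pairwise fun i j =>
          Disjoint (stanleySet (sqInd (F i)) (G i)) (stanleySet (sqInd (F j)) (G j))) ∧
        (⋃ i, stanleySet (sqInd (F i)) (G i)) = Mᶜ ∧
        ∀ i, k ≤ (G i).card) := by
  classical
  constructor
  · rintro ⟨r, u, Z, hdisj, hcover, hcard⟩
    set s : Finset (Fin r) := Finset.univ.filter (fun i => ∀ l, u i l ≤ 1) with hs
    let e := s.orderIsoOfFin rfl
    have hsq : ∀ j : Fin s.card, ∀ l, u (e j) l ≤ 1 := by
      intro j
      exact (Finset.mem_filter.mp (e j).2).2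
    refine ⟨s.card, fun j => (u (e j)).support,
      fun j => (u (e j)).support ∪ Z (e j),
      fun j => Finset.subset_union_left, ?_, ?_, ?_⟩
    · intro i j hij
      rw [Set.disjoint_left]
      intro a hai haj
      have hai' := (keyC (hsq i)).mp hai
      have haj' := (keyC (hsq j)).mp haj
      have hne : (e i : Fin r) ≠ (e j : Fin r) := by
        intro h
        exact hij (e.injective (Subtype.ext h))
      exact Set.disjoint_left.mp (hdisj hne) hai' haj'
    · ext a
      simp only [Set.mem_iUnion, Set.mem_compl_iff]
      constructor
      · rintro ⟨j, hj⟩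
        have h1 : sqInd a.support ∈ stanleySet (u (e j)) (Z (e j)) :=
          (keyC (hsq j)).mp hj
        have h2 : sqInd a.support ∈ Mᶜ := by
          rw [← hcover]; exact Set.mem_iUnion.mpr ⟨e j, h1⟩
        intro haM
        exact h2 ((sq_in_M hsqf a).mp haM)
      · intro ha
        have h2 : sqInd a.support ∈ Mᶜ := fun h => ha ((sq_in_M hsqf a).mpr h)
        rw [← hcover] at h2
        obtain ⟨i, hi⟩ := Set.mem_iUnion.mp h2
        have hsqi : ∀ l, u i l ≤ 1 := by
          intro l
          have h := (mem_stanleySet.mp hi).1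
          have := Finsupp.le_def.mp h l
          rw [sqInd_apply] at this
          split_ifs at this <;> omega
        have his : i ∈ s := Finset.mem_filter.mpr ⟨Finset.mem_univ _, hsqi⟩
        refine ⟨e.symm ⟨i, his⟩, ?_⟩
        have he : ((e (e.symm ⟨i, his⟩) : s) : Fin r) = i := by
          rw [e.apply_symm_apply]
        rw [show (e (e.symm ⟨i, his⟩) : Fin r) = i from he]
        exact (keyC hsqi).mpr hi
    · intro j
      exact le_trans (hcard (e j)) (Finset.card_le_card Finset.subset_union_right)
  · rintro ⟨r, F, G, hFG, hdisj, hcover, hcard⟩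
    exact ⟨r, fun i => sqInd (F i), G, hdisj, hcover, hcard⟩
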